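/- Let (E, F) be a resistance form on a set X whose resistance metric R is complete and such that (X,R) is doubling and uniformly perfect. Let A₁, A₂ be nonempty subsets of X such that A₁ is bounded in (X,R) and inf{R(x,y) : x ∈ A₁, y ∈ A₂} > 0. Then 𝓡(A₁,A₂) > 0. -/

import Mathlib

open Filter Set Metric
open scoped ENNReal Topology

/-- A resistance form `(E, F)` on a set `X` (Kigami):
`F` is a linear subspace of the real-valued functions on `X`, `E` is a nonnegative
symmetric bilinear form on `F` such that (RF1) constants belong to `F` and
`E(u,u) = 0` iff `u` is constant, (RF2) the quotient of `F` by the constants is a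
Hilbert space under `E` (stated as completeness of the `E`-seminorm on `F`),
(RF3) points of `X` are separated by `F`, (RF4) for `x ≠ y` the quantity
`R(x,y) = (inf {E(u,u) : u ∈ F, u x = 1, u y = 0})⁻¹` is finite (i.e. the infimum
is positive; an admissible `u` always exists), and (RF5) the Markov property holds
for the unit truncation. -/
structure ResistanceForm (X : Type*) where
  F : Set (X → ℝ)
  E : (X → ℝ) → (X → ℝ) → ℝ
  zero_mem : (0 : X → ℝ) ∈ F
  add_mem : ∀ {u v : X → ℝ}, u ∈ F → v ∈ F → u + v ∈ F
  smul_mem : ∀ (c : ℝ) {u : X → ℝ}, u ∈ F → c • u ∈ F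
  const_mem : ∀ c : ℝ, (fun _ => c) ∈ F
  symm : ∀ u ∈ F, ∀ v ∈ F, E u v = E v u
  add_left : ∀ u ∈ F, ∀ v ∈ F, ∀ w ∈ F, E (u + v) w = E u w + E v w
  smul_left : ∀ (c : ℝ), ∀ u ∈ F, ∀ v ∈ F, E (c • u) v = c * E u v
  nonneg : ∀ u ∈ F, 0 ≤ E u u
  null_iff_const : ∀ u ∈ F, (E u u = 0 ↔ ∃ c : ℝ, ∀ x, u x = c)
  complete : ∀ u : ℕ → (X → ℝ), (∀ n, u n ∈ F) →
    (∀ ε : ℝ, 0 < ε → ∃ N : ℕ, ∀ m ≥ N, ∀ n ≥ N, E (u m - u n) (u m - u n) < ε) →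
    ∃ v ∈ F, ∀ ε : ℝ, 0 < ε → ∃ N : ℕ, ∀ n ≥ N, E (v - u n) (v - u n) < ε
  sep : ∀ x y : X, x ≠ y → ∃ u ∈ F, u x ≠ u y
  exists_unit : ∀ x y : X, x ≠ y → ∃ u ∈ F, u x = 1 ∧ u y = 0
  inf_pos : ∀ x y : X, x ≠ y →
    0 < sInf {e : ℝ | ∃ u ∈ F, u x = 1 ∧ u y = 0 ∧ E u u = e}
  markov : ∀ u ∈ F, (fun x => max 0 (min 1 (u x))) ∈ F ∧
    E (fun x => max 0 (min 1 (u x))) (fun x => max 0 (min 1 (u x))) ≤ E u u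

namespace ResistanceForm

variable {X : Type*}

open Classical in
/-- The resistance metric `R` associated with a resistance form:
`R(x,x) = 0` and `R(x,y) = (inf {E(u,u) : u ∈ F, u x = 1, u y = 0})⁻¹` for `x ≠ y`. -/
noncomputable def rmetric (rf : ResistanceForm X) (x y : X) : ℝ :=
  if x = y then 0
  else (sInf {e : ℝ | ∃ u ∈ rf.F, u x = 1 ∧ u y = 0 ∧ rf.E u u = e})⁻¹

open Classical in
/-- The resistance `𝓡(A,B)` between two sets: the reciprocal of the minimal energy of
functions that are `≡ 1` on `A` and `≡ 0` on `B` if such functions exist, `0` if no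
such function exists, and `∞` if `A` or `B` is empty. -/
noncomputable def setRes (rf : ResistanceForm X) (A B : Set X) : ℝ≥0∞ :=
  if A.Nonempty ∧ B.Nonempty then
    (if ∃ u ∈ rf.F, (∀ x ∈ A, u x = 1) ∧ (∀ x ∈ B, u x = 0) then
      (ENNReal.ofReal
        (sInf {e : ℝ | ∃ u ∈ rf.F, (∀ x ∈ A, u x = 1) ∧ (∀ x ∈ B, u x = 0) ∧ rf.E u u = e}))⁻¹
    else 0)
  else ⊤

end ResistanceForm

/-- A distance function `ρ` on `X` is doubling: there is `N ∈ ℕ` such that every ball of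
radius `2r` is covered by `N` balls of radius `r`. -/
def DoublingOf {X : Type*} (ρ : X → X → ℝ) : Prop :=
  ∃ N : ℕ, ∀ (x : X) (r : ℝ), ∃ s : Finset X, s.card ≤ N ∧
    {y : X | ρ x y < 2 * r} ⊆ ⋃ z ∈ s, {y : X | ρ z y < r}

/-- A distance function `ρ` on `X` is uniformly perfect: there is `γ > 1` such that
`B(x, γ r) \ B(x, r) ≠ ∅` whenever `B(x,r)` is not the whole space. -/
def UniformlyPerfectOf {X : Type*} (ρ : X → X → ℝ) : Prop :=
  ∃ γ : ℝ, 1 < γ ∧ ∀ (x : X) (r : ℝ), 0 < r → {y : X | ρ x y < r} ≠ Set.univ →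
    ({y : X | ρ x y < γ * r} \ {y : X | ρ x y < r}).Nonempty

/-!
Only the existence of a function of `F` equal to `1` on `A₁` and `0` on `A₂` is at stake.
Functions of finite energy are `1/2`-Hölder: `(u a - u b)² ≤ R(a,b) E(u,u)`. Hence a
near-optimal potential from `x` to a point `y₀` with `R(x,y₀) ≥ r`, rescaled and truncated,
vanishes on a ball of radius `r/16` around `y₀` at energy cost `O(1/r)`, and by doubling
`N⁷` of them kill the whole annulus `r ≤ R(x,·) < 4r`. Over the annuli of radii `4ᵏ δ` the
energy norms decay geometrically, so by completeness of `(E,F)` the series converges and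
yields a bump at `x`, vanishing outside `B(x,δ)`, with energy `≤ C/δ` uniformly in `x`.
Hölder continuity keeps each bump `≥ 1/2` on a ball of a fixed radius `ρ`; as `A₁` is totally
bounded, the truncation of twice the sum of the bumps over a finite `ρ`-net of `A₁` works.
-/

section UnitTrunc

variable {X : Type*}

def unitTrunc (u : X → ℝ) : X → ℝ := fun x => max 0 (min 1 (u x))

lemma unitTrunc_nonneg (u : X → ℝ) (x : X) : 0 ≤ unitTrunc u x :=
  le_max_left _ _

lemma unitTrunc_le_one (u : X → ℝ) (x : X) : unitTrunc u x ≤ 1 :=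
  max_le zero_le_one (min_le_left _ _)

lemma unitTrunc_of_nonpos {u : X → ℝ} {x : X} (h : u x ≤ 0) :
    unitTrunc u x = 0 :=
  max_eq_left ((min_le_right _ _).trans h)

lemma unitTrunc_of_one_le {u : X → ℝ} {x : X} (h : 1 ≤ u x) :
    unitTrunc u x = 1 := by
  simp [unitTrunc, min_eq_left h]

end UnitTrunc

namespace ResistanceForm

variable {X : Type*} (rf : ResistanceForm X)

def toSubmodule : Submodule ℝ (X → ℝ) where
  carrier := rf.F
  add_mem' := rf.add_mem
  zero_mem' := rf.zero_mem
  smul_mem' := rf.smul_mem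

lemma sub_mem {u v : X → ℝ} (hu : u ∈ rf.F) (hv : v ∈ rf.F) : u - v ∈ rf.F :=
  rf.toSubmodule.sub_mem hu hv

lemma sum_mem {ι : Type*} {s : Finset ι} {f : ι → X → ℝ} (hf : ∀ i ∈ s, f i ∈ rf.F) :
    ∑ i ∈ s, f i ∈ rf.F :=
  rf.toSubmodule.sum_mem hf

lemma add_const_mem {u : X → ℝ} (hu : u ∈ rf.F) (c : ℝ) : u + (fun _ => c) ∈ rf.F :=
  rf.add_mem hu (rf.const_mem c)

lemma unitTrunc_mem {u : X → ℝ} (hu : u ∈ rf.F) : unitTrunc u ∈ rf.F :=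
  (rf.markov u hu).1

lemma E_unitTrunc_le {u : X → ℝ} (hu : u ∈ rf.F) :
    rf.E (unitTrunc u) (unitTrunc u) ≤ rf.E u u :=
  (rf.markov u hu).2

lemma E_smul_right (c : ℝ) {u v : X → ℝ} (hu : u ∈ rf.F) (hv : v ∈ rf.F) :
    rf.E u (c • v) = c * rf.E u v := by
  rw [rf.symm u hu _ (rf.smul_mem c hv), rf.smul_left c v hv u hu, rf.symm v hv u hu]

lemma E_smul_smul (c : ℝ) {u : X → ℝ} (hu : u ∈ rf.F) :
    rf.E (c • u) (c • u) = c ^ 2 * rf.E u u := by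
  rw [rf.smul_left c u hu _ (rf.smul_mem c hu), rf.E_smul_right c hu hu]; ring

lemma E_add_add {u v : X → ℝ} (hu : u ∈ rf.F) (hv : v ∈ rf.F) :
    rf.E (u + v) (u + v) = rf.E u u + 2 * rf.E u v + rf.E v v := by
  have huv := rf.add_mem hu hv
  rw [rf.add_left u hu v hv _ huv, rf.symm u hu _ huv, rf.symm v hv _ huv,
    rf.add_left u hu v hv u hu, rf.add_left u hu v hv v hv, rf.symm v hv u hu]
  ring

lemma sq_E_le_mul {u v : X → ℝ} (hu : u ∈ rf.F) (hv : v ∈ rf.F) :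
    rf.E u v ^ 2 ≤ rf.E u u * rf.E v v := by
  have hquad : ∀ t : ℝ, 0 ≤ rf.E v v * (t * t) + 2 * rf.E u v * t + rf.E u u := by
    intro t
    have h := rf.nonneg _ (rf.add_mem hu (rf.smul_mem t hv))
    rw [rf.E_add_add hu (rf.smul_mem t hv), rf.E_smul_right t hu hv,
      rf.E_smul_smul t hv] at h
    linarith
  have := discrim_le_zero hquad
  rw [discrim] at this
  linarith

lemma E_const (c : ℝ) : rf.E (fun _ => c) (fun _ => c) = 0 :=
  (rf.null_iff_const _ (rf.const_mem c)).2 ⟨c, fun _ => rfl⟩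

lemma E_const_right {u : X → ℝ} (hu : u ∈ rf.F) (c : ℝ) : rf.E u (fun _ => c) = 0 := by
  have := rf.sq_E_le_mul hu (rf.const_mem c)
  rw [rf.E_const, mul_zero] at this
  exact pow_eq_zero_iff two_ne_zero |>.1 (le_antisymm this (sq_nonneg _))

lemma E_add_const {u : X → ℝ} (hu : u ∈ rf.F) (c : ℝ) :
    rf.E (u + fun _ => c) (u + fun _ => c) = rf.E u u := by
  rw [rf.E_add_add hu (rf.const_mem c), rf.E_const_right hu c, rf.E_const]
  ring

lemma E_affine {u : X → ℝ} (hu : u ∈ rf.F) (a c : ℝ) :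
    rf.E (a • u + fun _ => c) (a • u + fun _ => c) = a ^ 2 * rf.E u u := by
  rw [rf.E_add_const (rf.smul_mem a hu), rf.E_smul_smul a hu]

lemma E_one_sub {u : X → ℝ} (hu : u ∈ rf.F) : rf.E (1 - u) (1 - u) = rf.E u u := by
  have h : 1 - u = (-1 : ℝ) • u + fun _ => 1 := by
    ext; simp only [Pi.sub_apply, Pi.one_apply, Pi.add_apply, Pi.smul_apply, smul_eq_mul]; ring
  rw [h, rf.E_affine hu]; ring

lemma E_sub_comm {u v : X → ℝ} (hu : u ∈ rf.F) (hv : v ∈ rf.F) :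
    rf.E (u - v) (u - v) = rf.E (v - u) (v - u) := by
  rw [← neg_sub, ← neg_one_smul ℝ, rf.E_smul_smul _ (rf.sub_mem hv hu)]; ring

noncomputable def energyNorm (u : X → ℝ) : ℝ := √(rf.E u u)

lemma energyNorm_nonneg (u : X → ℝ) : 0 ≤ rf.energyNorm u := Real.sqrt_nonneg _

lemma sq_energyNorm {u : X → ℝ} (hu : u ∈ rf.F) : rf.energyNorm u ^ 2 = rf.E u u :=
  Real.sq_sqrt (rf.nonneg u hu)

lemma energyNorm_lt_iff {u : X → ℝ} (hu : u ∈ rf.F) {ε : ℝ} :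
    rf.energyNorm u < √ε ↔ rf.E u u < ε :=
  Real.sqrt_lt_sqrt_iff (rf.nonneg u hu)

lemma energyNorm_sub_comm {u v : X → ℝ} (hu : u ∈ rf.F) (hv : v ∈ rf.F) :
    rf.energyNorm (u - v) = rf.energyNorm (v - u) := by
  rw [energyNorm, energyNorm, rf.E_sub_comm hu hv]

lemma energyNorm_add_const {u : X → ℝ} (hu : u ∈ rf.F) (c : ℝ) :
    rf.energyNorm (u + fun _ => c) = rf.energyNorm u := by
  rw [energyNorm, energyNorm, rf.E_add_const hu]

lemma energyNorm_add_le {u v : X → ℝ} (hu : u ∈ rf.F) (hv : v ∈ rf.F) :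
    rf.energyNorm (u + v) ≤ rf.energyNorm u + rf.energyNorm v := by
  have hCS : rf.E u v ≤ rf.energyNorm u * rf.energyNorm v := by
    rw [energyNorm, energyNorm, ← Real.sqrt_mul (rf.nonneg u hu)]
    exact Real.le_sqrt_of_sq_le (rf.sq_E_le_mul hu hv)
  refine Real.sqrt_le_iff.2 ⟨add_nonneg (rf.energyNorm_nonneg u) (rf.energyNorm_nonneg v), ?_⟩
  rw [rf.E_add_add hu hv, add_sq, rf.sq_energyNorm hu, rf.sq_energyNorm hv]
  linarith

lemma energyNorm_sum_le {ι : Type*} (s : Finset ι) {f : ι → X → ℝ}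
    (hf : ∀ i ∈ s, f i ∈ rf.F) : rf.energyNorm (∑ i ∈ s, f i) ≤ ∑ i ∈ s, rf.energyNorm (f i) := by
  classical
  induction s using Finset.induction_on with
  | empty => simp [energyNorm, show rf.E 0 0 = 0 from rf.E_const 0]
  | insert a s ha ih =>
    have hs : ∀ i ∈ s, f i ∈ rf.F := fun i hi => hf i (Finset.mem_insert_of_mem hi)
    rw [Finset.sum_insert ha, Finset.sum_insert ha]
    exact (rf.energyNorm_add_le (hf a (Finset.mem_insert_self a s)) (rf.sum_mem hs)).trans
      (add_le_add le_rfl (ih hs))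

lemma energyNorm_sum_range_sub_le {W : ℕ → X → ℝ} (hWF : ∀ k, W k ∈ rf.F) {b : ℕ → ℝ}
    (hWb : ∀ k, rf.energyNorm (W k) ≤ b k) (m n : ℕ) :
    rf.energyNorm (∑ k ∈ Finset.range m, W k - ∑ k ∈ Finset.range n, W k) ≤
      dist (∑ k ∈ Finset.range m, b k) (∑ k ∈ Finset.range n, b k) := by
  wlog hnm : n ≤ m generalizing m n
  · rw [rf.energyNorm_sub_comm (rf.sum_mem fun k _ => hWF k) (rf.sum_mem fun k _ => hWF k),
      dist_comm]
    exact this n m (le_of_not_ge hnm)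
  rw [← Finset.sum_Ico_eq_sub _ hnm, Real.dist_eq, ← Finset.sum_Ico_eq_sub _ hnm]
  calc rf.energyNorm (∑ k ∈ Finset.Ico n m, W k) ≤ ∑ k ∈ Finset.Ico n m, rf.energyNorm (W k) :=
        rf.energyNorm_sum_le _ fun k _ => hWF k
    _ ≤ ∑ k ∈ Finset.Ico n m, b k := Finset.sum_le_sum fun k _ => hWb k
    _ ≤ _ := le_abs_self _

lemma exists_tendsto_energyNorm_sum {W : ℕ → X → ℝ} (hWF : ∀ k, W k ∈ rf.F) {b : ℕ → ℝ}
    (hb : Summable b) (hWb : ∀ k, rf.energyNorm (W k) ≤ b k) :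
    ∃ v ∈ rf.F, Tendsto (fun n => rf.energyNorm (v - ∑ k ∈ Finset.range n, W k)) atTop (𝓝 0) ∧
      rf.energyNorm v ≤ ∑' k, b k := by
  set Φ : ℕ → X → ℝ := fun n => ∑ k ∈ Finset.range n, W k
  have hΦF : ∀ n, Φ n ∈ rf.F := fun n => rf.sum_mem fun k _ => hWF k
  obtain ⟨v, hvF, hv⟩ := rf.complete Φ hΦF fun ε hε => by
    obtain ⟨K, hK⟩ := Metric.cauchySeq_iff.1 hb.hasSum.tendsto_sum_nat.cauchySeq _
      (Real.sqrt_pos.2 hε)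
    exact ⟨K, fun m hm n hn => (rf.energyNorm_lt_iff (rf.sub_mem (hΦF m) (hΦF n))).1
      ((rf.energyNorm_sum_range_sub_le hWF hWb m n).trans_lt (hK m hm n hn))⟩
  have hconv : Tendsto (fun n => rf.energyNorm (v - Φ n)) atTop (𝓝 0) := by
    refine Metric.tendsto_atTop.2 fun ε hε => ?_
    obtain ⟨K, hK⟩ := hv (ε ^ 2) (by positivity)
    refine ⟨K, fun n hn => ?_⟩
    rw [Real.dist_eq, sub_zero, abs_of_nonneg (rf.energyNorm_nonneg _), ← Real.sqrt_sq hε.le,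
      rf.energyNorm_lt_iff (rf.sub_mem hvF (hΦF n))]
    exact hK n hn
  refine ⟨v, hvF, hconv, ge_of_tendsto' (by simpa using hconv.add_const (∑' k, b k)) fun n => ?_⟩
  calc rf.energyNorm v = rf.energyNorm ((v - Φ n) + Φ n) := by rw [sub_add_cancel]
    _ ≤ rf.energyNorm (v - Φ n) + rf.energyNorm (Φ n) :=
        rf.energyNorm_add_le (rf.sub_mem hvF (hΦF n)) (hΦF n)
    _ ≤ rf.energyNorm (v - Φ n) + ∑ k ∈ Finset.range n, b k := by
        gcongr
        exact (rf.energyNorm_sum_le _ fun k _ => hWF k).trans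
          (Finset.sum_le_sum fun k _ => hWb k)
    _ ≤ rf.energyNorm (v - Φ n) + ∑' k, b k := by
        gcongr
        exact hb.sum_le_tsum _ fun k _ => (rf.energyNorm_nonneg _).trans (hWb k)

lemma setRes_pos_of_exists {A B : Set X}
    (h : ∃ u ∈ rf.F, (∀ x ∈ A, u x = 1) ∧ ∀ x ∈ B, u x = 0) : 0 < rf.setRes A B := by
  rw [setRes, if_pos h]
  split_ifs
  · exact ENNReal.inv_pos.2 ENNReal.ofReal_ne_top
  · simp

end ResistanceForm

def IsDoublingWith (N : ℕ) (X : Type*) [PseudoMetricSpace X] : Prop :=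
  ∀ (x : X) (r : ℝ), ∃ s : Finset X, s.card ≤ N ∧ ball x (2 * r) ⊆ ⋃ z ∈ s, ball z r

lemma DoublingOf.exists_isDoublingWith {X : Type*} [PseudoMetricSpace X]
    (h : DoublingOf fun x y : X => dist x y) : ∃ N, IsDoublingWith N X := by
  obtain ⟨N, hN⟩ := h
  refine ⟨N, fun x r => ?_⟩
  obtain ⟨s, hs, hcov⟩ := hN x r
  refine ⟨s, hs, fun y hy => ?_⟩
  obtain ⟨z, hz, hzy⟩ := mem_iUnion₂.1 (hcov (show dist x y < 2 * r by rwa [dist_comm]))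
  exact mem_iUnion₂.2 ⟨z, hz, by rwa [mem_ball, dist_comm]⟩

namespace IsDoublingWith

variable {N : ℕ} {X : Type*} [PseudoMetricSpace X]

lemma exists_cover_pow (h : IsDoublingWith N X) (m : ℕ) (x : X) (r : ℝ) :
    ∃ s : Finset X, s.card ≤ N ^ m ∧ ball x (2 ^ m * r) ⊆ ⋃ z ∈ s, ball z r := by
  induction m generalizing r with
  | zero => exact ⟨{x}, by simp, by simp⟩
  | succ m ih =>
    classical
    obtain ⟨s, hs, hcov⟩ := ih (2 * r)
    choose t ht htcov using fun z : X => h z r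
    refine ⟨s.biUnion t, ?_, fun y hy => ?_⟩
    · calc (s.biUnion t).card ≤ ∑ z ∈ s, (t z).card := Finset.card_biUnion_le
        _ ≤ s.card * N := Finset.sum_le_card_nsmul _ _ _ fun z _ => ht z
        _ ≤ N ^ (m + 1) := by rw [pow_succ]; exact Nat.mul_le_mul_right N hs
    · rw [pow_succ, mul_assoc] at hy
      obtain ⟨z, hz, hzy⟩ := mem_iUnion₂.1 (hcov hy)
      obtain ⟨w, hw, hwy⟩ := mem_iUnion₂.1 (htcov z hzy)
      exact mem_iUnion₂.2 ⟨w, Finset.mem_biUnion.2 ⟨z, hz, hw⟩, hwy⟩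

lemma totallyBounded (h : IsDoublingWith N X) {A : Set X} (hA : Bornology.IsBounded A) :
    TotallyBounded A := by
  rcases A.eq_empty_or_nonempty with rfl | ⟨x, -⟩
  · exact totallyBounded_empty
  obtain ⟨R, hR⟩ := hA.subset_ball x
  refine Metric.totallyBounded_iff.2 fun ε hε => ?_
  obtain ⟨m, hm⟩ := pow_unbounded_of_one_lt (R / ε) one_lt_two
  obtain ⟨s, -, hcov⟩ := h.exists_cover_pow m x ε
  refine ⟨s, s.finite_toSet, hR.trans ((ball_subset_ball ?_).trans hcov)⟩
  exact (div_le_iff₀ hε).1 hm.le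

end IsDoublingWith

namespace ResistanceForm

variable {X : Type*} [MetricSpace X] (rf : ResistanceForm X)
  (hR : ∀ x y : X, dist x y = rf.rmetric x y)
include hR

lemma sInf_energy_eq_inv_dist {x y : X} (hxy : x ≠ y) :
    sInf {e : ℝ | ∃ u ∈ rf.F, u x = 1 ∧ u y = 0 ∧ rf.E u u = e} = (dist x y)⁻¹ := by
  rw [hR, rmetric, if_neg hxy, inv_inv]

lemma sq_sub_le_dist_mul_E {u : X → ℝ} (hu : u ∈ rf.F) (a b : X) :
    (u a - u b) ^ 2 ≤ dist a b * rf.E u u := by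
  rcases eq_or_ne (u a) (u b) with he | he
  · rw [he, sub_self, sq, zero_mul]
    exact mul_nonneg dist_nonneg (rf.nonneg u hu)
  have hab : a ≠ b := fun h => he (h ▸ rfl)
  set t := u a - u b
  have ht : t ≠ 0 := sub_ne_zero.2 he
  have hv : t⁻¹ • u + (fun _ => -(t⁻¹ * u b)) ∈ rf.F := rf.add_const_mem (rf.smul_mem _ hu) _
  have hinf : (dist a b)⁻¹ ≤ t⁻¹ ^ 2 * rf.E u u := by
    rw [← rf.sInf_energy_eq_inv_dist hR hab, ← rf.E_affine hu]
    refine csInf_le ⟨0, ?_⟩ ⟨_, hv, ?_, ?_, rfl⟩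
    · rintro e ⟨w, hw, -, -, rfl⟩
      exact rf.nonneg w hw
    · simp only [Pi.add_apply, Pi.smul_apply, smul_eq_mul]
      field_simp
      ring
    · simp
  have hd : 0 < dist a b := dist_pos.2 hab
  rw [inv_pow, ← div_eq_inv_mul, le_div_iff₀ (by positivity), inv_mul_le_iff₀ hd] at hinf
  exact hinf

lemma exists_potential_le_two_div {x y : X} (hxy : x ≠ y) :
    ∃ u ∈ rf.F, u x = 1 ∧ u y = 0 ∧ rf.E u u ≤ 2 / dist x y := by
  obtain ⟨u₀, hu₀, hx₀, hy₀⟩ := rf.exists_unit x y hxy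
  obtain ⟨_, ⟨u, hu, hx, hy, rfl⟩, hlt⟩ :=
    Real.lt_sInf_add_pos (s := {e : ℝ | ∃ u ∈ rf.F, u x = 1 ∧ u y = 0 ∧ rf.E u u = e})
      ⟨_, u₀, hu₀, hx₀, hy₀, rfl⟩ (inv_pos.2 (dist_pos.2 hxy))
  rw [rf.sInf_energy_eq_inv_dist hR hxy] at hlt
  exact ⟨u, hu, hx, hy, by rw [div_eq_mul_inv]; linarith⟩

lemma exists_cutoff_vanishing_near {x y₀ : X} {s : ℝ} (hs : 0 < s) (hd : s ≤ dist x y₀) :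
    ∃ v ∈ rf.F, v x = 1 ∧ (∀ z, v z ≤ 1) ∧ (∀ y ∈ closedBall y₀ (s / 16), v y = 0) ∧
      rf.E v v ≤ 8 / s := by
  have hxy : x ≠ y₀ := by rintro rfl; rw [dist_self] at hd; linarith
  obtain ⟨u, hu, hx, hy, hE⟩ := rf.exists_potential_le_two_div hR hxy
  have hEs : rf.E u u ≤ 2 / s := hE.trans (div_le_div_of_nonneg_left zero_le_two hs hd)
  have hf : (2 : ℝ) • u + (fun _ => -1) ∈ rf.F := rf.add_const_mem (rf.smul_mem 2 hu) _
  refine ⟨unitTrunc ((2 : ℝ) • u + fun _ => -1), rf.unitTrunc_mem hf, ?_,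
    unitTrunc_le_one _, fun y hy' => unitTrunc_of_nonpos ?_, ?_⟩
  · apply unitTrunc_of_one_le
    norm_num [hx]
  · have hsq : u y ^ 2 ≤ 1 / 8 := by
      have h := rf.sq_sub_le_dist_mul_E hR hu y y₀
      rw [hy, sub_zero] at h
      calc u y ^ 2 ≤ dist y y₀ * rf.E u u := h
        _ ≤ s / 16 * (2 / s) :=
          mul_le_mul (mem_closedBall.1 hy') hEs (rf.nonneg u hu) (by positivity)
        _ = 1 / 8 := by field_simp; norm_num
    simp only [Pi.add_apply, Pi.smul_apply, smul_eq_mul]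
    nlinarith
  · calc rf.E (unitTrunc _) (unitTrunc _) ≤ rf.E ((2 : ℝ) • u + fun _ => -1) _ :=
          rf.E_unitTrunc_le hf
      _ = 4 * rf.E u u := by rw [rf.E_affine hu]; norm_num
      _ ≤ 8 / s := by linarith [show 4 * (2 / s) = 8 / s by ring]

lemma exists_cutoff_vanishing_on_ball (x z : X) {r : ℝ} (hr : 0 < r) :
    ∃ v ∈ rf.F, v x = 1 ∧ (∀ t, v t ≤ 1) ∧ (∀ y ∈ ball z (r / 32), r ≤ dist x y → v y = 0) ∧
      rf.E v v ≤ 8 / r := by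
  by_cases h : ∃ y₀ ∈ ball z (r / 32), r ≤ dist x y₀
  · obtain ⟨y₀, hy₀, hd⟩ := h
    obtain ⟨v, hv, hx, hle, hvan, hE⟩ := rf.exists_cutoff_vanishing_near hR hr hd
    refine ⟨v, hv, hx, hle, fun y hy _ => hvan y ?_, hE⟩
    rw [mem_ball] at hy hy₀
    rw [mem_closedBall]
    linarith [dist_triangle_right y y₀ z]
  · push Not at h
    refine ⟨fun _ => 1, rf.const_mem 1, rfl, fun _ => le_rfl,
      fun y hy hd => absurd hd (not_le.2 (h y hy)), ?_⟩
    rw [rf.E_const]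
    positivity

lemma exists_annulus_function {N : ℕ} (hN : IsDoublingWith N X) (x : X) {r : ℝ} (hr : 0 < r) :
    ∃ W ∈ rf.F, W x = 0 ∧ (∀ z, 0 ≤ W z) ∧ (∀ y, r ≤ dist x y → dist x y < 4 * r → 1 ≤ W y) ∧
      rf.energyNorm W ≤ N ^ 7 * √(8 / r) := by
  obtain ⟨s, hs, hcov⟩ := hN.exists_cover_pow 7 x (r / 32)
  choose v hvF hvx hv1 hvan hvE using fun z => rf.exists_cutoff_vanishing_on_ball hR x z hr
  have hwF : ∀ z, 1 - v z ∈ rf.F := fun z => rf.sub_mem (rf.const_mem 1) (hvF z)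
  have hw0 : ∀ z t, 0 ≤ (1 - v z) t := fun z t => sub_nonneg.2 (hv1 z t)
  refine ⟨∑ z ∈ s, (1 - v z), rf.sum_mem fun z _ => hwF z, ?_, fun t => ?_, fun y h₁ h₂ => ?_, ?_⟩
  · simp [Finset.sum_apply, hvx]
  · rw [Finset.sum_apply]
    exact Finset.sum_nonneg fun z _ => hw0 z t
  · have hy : y ∈ ball x (2 ^ 7 * (r / 32)) := by rw [mem_ball, dist_comm]; linarith
    obtain ⟨z, hz, hzy⟩ := mem_iUnion₂.1 (hcov hy)
    rw [Finset.sum_apply]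
    calc 1 = (1 - v z) y := by simp [hvan z y hzy h₁]
      _ ≤ ∑ z ∈ s, (1 - v z) y := Finset.single_le_sum (fun z _ => hw0 z y) hz
  · calc rf.energyNorm (∑ z ∈ s, (1 - v z)) ≤ ∑ z ∈ s, rf.energyNorm (1 - v z) :=
          rf.energyNorm_sum_le s fun z _ => hwF z
      _ ≤ ∑ _z ∈ s, √(8 / r) := Finset.sum_le_sum fun z _ => by
          rw [energyNorm, rf.E_one_sub (hvF z)]
          exact Real.sqrt_le_sqrt (hvE z)
      _ = s.card * √(8 / r) := by rw [Finset.sum_const, nsmul_eq_mul]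
      _ ≤ N ^ 7 * √(8 / r) := by gcongr; exact_mod_cast hs

lemma tendsto_apply_of_tendsto_energyNorm {u : ℕ → X → ℝ} {g : X → ℝ} (hu : ∀ n, u n ∈ rf.F)
    (hg : g ∈ rf.F) {x : X} (hx : ∀ n, u n x = g x)
    (h : Tendsto (fun n => rf.energyNorm (g - u n)) atTop (𝓝 0)) (z : X) :
    Tendsto (fun n => u n z) atTop (𝓝 (g z)) := by
  have hbound : ∀ n, dist (u n z) (g z) ≤ √(dist z x) * rf.energyNorm (g - u n) := by
    intro n
    have h := rf.sq_sub_le_dist_mul_E hR (rf.sub_mem hg (hu n)) z x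
    simp only [Pi.sub_apply, hx n, sub_self, sub_zero] at h
    rw [dist_comm, Real.dist_eq, energyNorm, ← Real.sqrt_mul dist_nonneg]
    exact Real.abs_le_sqrt h
  refine tendsto_iff_dist_tendsto_zero.2 (squeeze_zero (fun n => dist_nonneg) hbound ?_)
  simpa using h.const_mul √(dist z x)

lemma exists_tendsto_sum_of_summable {W : ℕ → X → ℝ} (hWF : ∀ k, W k ∈ rf.F) {x : X}
    (hWx : ∀ k, W k x = 0) {b : ℕ → ℝ} (hb : Summable b)
    (hWb : ∀ k, rf.energyNorm (W k) ≤ b k) :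
    ∃ g ∈ rf.F, (∀ z, Tendsto (fun n => ∑ k ∈ Finset.range n, W k z) atTop (𝓝 (g z))) ∧
      rf.energyNorm g ≤ ∑' k, b k := by
  obtain ⟨v, hvF, hconv, hv⟩ := rf.exists_tendsto_energyNorm_sum hWF hb hWb
  -- Normalising the limit at `x` makes it the pointwise limit, not just the energy limit.
  set g : X → ℝ := v + fun _ => -v x
  have hΦF : ∀ n, ∑ k ∈ Finset.range n, W k ∈ rf.F := fun n => rf.sum_mem fun k _ => hWF k
  have hgΦ : ∀ n, g - ∑ k ∈ Finset.range n, W k = (v - ∑ k ∈ Finset.range n, W k) + fun _ => -v x :=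
    fun n => by ext; simp only [Pi.sub_apply, Pi.add_apply, g]; ring
  have hgconv : Tendsto (fun n => rf.energyNorm (g - ∑ k ∈ Finset.range n, W k)) atTop (𝓝 0) := by
    simpa only [hgΦ, rf.energyNorm_add_const (rf.sub_mem hvF (hΦF _))] using hconv
  have hΦx : ∀ n, (∑ k ∈ Finset.range n, W k) x = g x := fun n => by
    simp [g, Finset.sum_apply, hWx]
  refine ⟨g, rf.add_const_mem hvF _, fun z => ?_, by rwa [rf.energyNorm_add_const hvF]⟩
  simpa [Finset.sum_apply, g] using
    rf.tendsto_apply_of_tendsto_energyNorm hR hΦF (rf.add_const_mem hvF _) hΦx hgconv z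

lemma exists_bump {N : ℕ} (hN : IsDoublingWith N X) (x : X) {δ : ℝ} (hδ : 0 < δ) :
    ∃ ψ ∈ rf.F, ψ x = 1 ∧ (∀ z, 0 ≤ ψ z) ∧ (∀ y, δ ≤ dist x y → ψ y = 0) ∧
      rf.E ψ ψ ≤ 32 * N ^ 14 / δ := by
  choose W hWF hWx hW0 hWann hWnrm using
    fun k : ℕ => rf.exists_annulus_function hR hN x (r := 4 ^ k * δ) (by positivity)
  set c : ℝ := N ^ 7 * √(8 / δ)
  have hWb : ∀ k, rf.energyNorm (W k) ≤ c * (1 / 2) ^ k := fun k => by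
    have h : 8 / (4 ^ k * δ) = 8 / δ * ((1 / 2) ^ k) ^ 2 := by
      rw [← pow_mul, mul_comm k, pow_mul, div_pow, one_pow, div_pow, one_pow]
      field_simp
      norm_num
    have := hWnrm k
    rwa [h, Real.sqrt_mul (by positivity), Real.sqrt_sq (by positivity), ← mul_assoc] at this
  obtain ⟨g, hgF, hg, hgnrm⟩ :=
    rf.exists_tendsto_sum_of_summable hR hWF hWx (summable_geometric_two.mul_left c) hWb
  have hgx : g x = 0 := tendsto_nhds_unique (hg x) (by simp [hWx])
  have hg1 : ∀ y, δ ≤ dist x y → 1 ≤ g y := by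
    intro y hy
    obtain ⟨k, hk₁, hk₂⟩ := exists_nat_pow_near ((one_le_div hδ).2 hy) (by norm_num : (1 : ℝ) < 4)
    rw [le_div_iff₀ hδ] at hk₁
    rw [div_lt_iff₀ hδ, pow_succ, mul_comm _ (4 : ℝ), mul_assoc] at hk₂
    have hmono : Monotone fun n => ∑ k ∈ Finset.range n, W k y :=
      monotone_nat_of_le_succ fun n => by rw [Finset.sum_range_succ]; linarith [hW0 n y]
    calc 1 ≤ W k y := hWann k y hk₁ hk₂
      _ ≤ ∑ j ∈ Finset.range (k + 1), W j y :=
          Finset.single_le_sum (fun j _ => hW0 j y) (Finset.self_mem_range_succ k)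
      _ ≤ g y := hmono.ge_of_tendsto (hg y) _
  have hψF : 1 - g ∈ rf.F := rf.sub_mem (rf.const_mem 1) hgF
  refine ⟨unitTrunc (1 - g), rf.unitTrunc_mem hψF, unitTrunc_of_one_le (by simp [hgx]),
    unitTrunc_nonneg _, fun y hy => unitTrunc_of_nonpos (by simp [hg1 y hy]), ?_⟩
  rw [tsum_mul_left, tsum_geometric_two] at hgnrm
  calc rf.E (unitTrunc (1 - g)) (unitTrunc (1 - g)) ≤ rf.E g g :=
        (rf.E_unitTrunc_le hψF).trans (rf.E_one_sub hgF).le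
    _ = rf.energyNorm g ^ 2 := (rf.sq_energyNorm hgF).symm
    _ ≤ (c * 2) ^ 2 := by gcongr; exact rf.energyNorm_nonneg g
    _ = 32 * N ^ 14 / δ := by
        rw [mul_pow, mul_pow, Real.sq_sqrt (by positivity)]; ring

lemma exists_eq_one_eq_zero_of_totallyBounded {N : ℕ} (hN : IsDoublingWith N X) {A B : Set X}
    (hA : TotallyBounded A) {δ : ℝ} (hδ : 0 < δ) (hAB : ∀ x ∈ A, ∀ y ∈ B, δ ≤ dist x y) :
    ∃ u ∈ rf.F, (∀ x ∈ A, u x = 1) ∧ ∀ y ∈ B, u y = 0 := by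
  set C : ℝ := 32 * N ^ 14 / δ
  choose ψ hψF hψx hψ0 hψvan hψE using fun p => rf.exists_bump hR hN p hδ
  set ρ : ℝ := 1 / (4 * C + 4)
  have hρ : ρ * C ≤ 1 / 4 := by
    rw [div_mul_eq_mul_div, one_mul, div_le_div_iff₀ (by positivity) (by norm_num)]
    linarith
  have hnear : ∀ p z, dist z p < ρ → 1 / 2 ≤ ψ p z := by
    intro p z hz
    have h := rf.sq_sub_le_dist_mul_E hR (hψF p) z p
    rw [hψx p] at h
    have : dist z p * rf.E (ψ p) (ψ p) ≤ ρ * C :=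
      mul_le_mul hz.le (hψE p) (rf.nonneg _ (hψF p)) (by positivity)
    nlinarith
  obtain ⟨t, htA, ht, hcov⟩ := Metric.finite_approx_of_totallyBounded hA ρ (by positivity)
  set G : X → ℝ := (2 : ℝ) • ∑ p ∈ ht.toFinset, ψ p
  have hG : ∀ z, G z = 2 * ∑ p ∈ ht.toFinset, ψ p z := fun z => by simp [G, Finset.sum_apply]
  refine ⟨unitTrunc G, rf.unitTrunc_mem (rf.smul_mem 2 (rf.sum_mem fun p _ => hψF p)),
    fun a ha => unitTrunc_of_one_le ?_, fun y hy => unitTrunc_of_nonpos ?_⟩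
  · obtain ⟨p, hp, hap⟩ := mem_iUnion₂.1 (hcov ha)
    have := Finset.single_le_sum (fun q _ => hψ0 q a) (ht.mem_toFinset.2 hp)
    rw [hG]
    linarith [hnear p a hap]
  · rw [hG, Finset.sum_eq_zero fun p hp => hψvan p y (hAB p (htA (ht.mem_toFinset.1 hp)) y hy),
      mul_zero]

end ResistanceForm

theorem setRes_pos_of_bounded_of_sep_general {X : Type*} [MetricSpace X]
    (rf : ResistanceForm X) (hR : ∀ x y : X, dist x y = rf.rmetric x y)
    (hdb : DoublingOf fun x y : X => dist x y)
    (A₁ A₂ : Set X)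
    (hbd : Bornology.IsBounded A₁)
    (hsep : ∃ δ : ℝ, 0 < δ ∧ ∀ x ∈ A₁, ∀ y ∈ A₂, δ ≤ dist x y) :
    0 < rf.setRes A₁ A₂ := by
  obtain ⟨δ, hδ, hsep⟩ := hsep
  obtain ⟨N, hN⟩ := hdb.exists_isDoublingWith
  exact rf.setRes_pos_of_exists
    (rf.exists_eq_one_eq_zero_of_totallyBounded hR hN (hN.totallyBounded hbd) hδ hsep)

/-- Under the standing assumptions, if `A₁, A₂` are nonempty subsets
with `A₁` bounded in `(X,R)` and `inf {R(x,y) : x ∈ A₁, y ∈ A₂} > 0`, then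
`𝓡(A₁,A₂) > 0`. -/
theorem setRes_pos_of_bounded_of_sep {X : Type*} [MetricSpace X] [CompleteSpace X]
    (rf : ResistanceForm X) (hR : ∀ x y : X, dist x y = rf.rmetric x y)
    (hdb : DoublingOf fun x y : X => dist x y)
    (hup : UniformlyPerfectOf fun x y : X => dist x y)
    (A₁ A₂ : Set X) (h₁ : A₁.Nonempty) (h₂ : A₂.Nonempty)
    (hbd : Bornology.IsBounded A₁)
    (hsep : ∃ δ : ℝ, 0 < δ ∧ ∀ x ∈ A₁, ∀ y ∈ A₂, δ ≤ dist x y) :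
    0 < rf.setRes A₁ A₂ :=
  setRes_pos_of_bounded_of_sep_general rf hR hdb A₁ A₂ hbd hsep
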